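/- arXiv:2602.03049 — 3 statements merged into one kernel-verified Lean document; each statement's English description precedes it below -/
import Mathlib

section
/- Suppose for each fixed θ the map y ↦ G_θ(y) := E_{Z ∼ D(θ)} G(y, Z) is α-strongly monotone on Θ, the distribution map D is ε-sensitive in Wasserstein-1 distance (W₁(D(θ), D(θ')) ≤ ε‖θ - θ'‖), and z ↦ G(y, z) is β-Lipschitz for every y. Define sol(θ) as the unique zero of G_θ in Θ. Then sol is (βε/α)-Lipschitz: ‖sol(θ) - sol(θ')‖ ≤ (βε/α)‖θ - θ'‖ for all θ, θ' ∈ Θ. -/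
/-!
Let `y = sol θ` and `y' = sol θ'`. Since `G_θ y = 0 = G_θ' y'`, strong monotonicity of `G_θ` gives
`α ‖y - y'‖² ≤ ⟪G_θ' y' - G_θ y', y - y'⟫`, so `α ‖y - y'‖ ≤ ‖G_θ' y' - G_θ y'‖`.
The right side is the gap `w` between the means of the `β`-Lipschitz map `G y'` under two
distributions at `W₁`-distance at most `ε ‖θ - θ'‖`. Testing the duality against the
`1`-Lipschitz function `⟪w, G y' ·⟫ / (β ‖w‖)` gives `‖w‖² ≤ β ‖w‖ ε ‖θ - θ'‖`.
-/

open MeasureTheory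
open scoped NNReal RealInnerProductSpace

section TestFunctionBound

variable {Z : Type*} [PseudoMetricSpace Z] [MeasurableSpace Z] {μ ν : Measure Z} {C : ℝ}

theorem integral_sub_integral_le_of_lipschitzWith
    (h : ∀ f : Z → ℝ, LipschitzWith 1 f → ∫ z, f z ∂μ - ∫ z, f z ∂ν ≤ C)
    {K : ℝ≥0} (hK : 0 < K) {f : Z → ℝ} (hf : LipschitzWith K f) :
    ∫ z, f z ∂μ - ∫ z, f z ∂ν ≤ K * C := by
  have hscaled : LipschitzWith 1 fun z => (K : ℝ)⁻¹ * f z := by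
    have := (lipschitzWith_smul (K : ℝ)⁻¹).comp hf
    rwa [nnnorm_inv, NNReal.nnnorm_eq, inv_mul_cancel₀ hK.ne'] at this
  have := h _ hscaled
  rw [integral_const_mul, integral_const_mul, ← mul_sub] at this
  rwa [inv_mul_le_iff₀ (NNReal.coe_pos.mpr hK)] at this

variable {E : Type*} [NormedAddCommGroup E] [InnerProductSpace ℝ E] [CompleteSpace E]

theorem norm_integral_sub_integral_le_of_lipschitzWith
    (h : ∀ f : Z → ℝ, LipschitzWith 1 f → ∫ z, f z ∂μ - ∫ z, f z ∂ν ≤ C)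
    {K : ℝ≥0} (hK : 0 < K) {g : Z → E} (hg : LipschitzWith K g)
    (hμ : Integrable g μ) (hν : Integrable g ν) :
    ‖∫ z, g z ∂μ - ∫ z, g z ∂ν‖ ≤ K * C := by
  set w := ∫ z, g z ∂μ - ∫ z, g z ∂ν
  rcases eq_or_ne w 0 with hw | hw
  · have hC : 0 ≤ C := by simpa using h (fun _ => 0) (LipschitzWith.const' 0)
    rw [hw, norm_zero]
    positivity
  have hw' : 0 < ‖w‖ := norm_pos_iff.mpr hw
  have hinner : LipschitzWith (‖w‖₊ * K) fun z => ⟪w, g z⟫ := by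
    have hnorm : ‖innerSL ℝ w‖₊ = ‖w‖₊ := Subtype.ext (innerSL_apply_norm ℝ w)
    rw [← hnorm]
    exact (innerSL ℝ w).lipschitz.comp hg
  have key := integral_sub_integral_le_of_lipschitzWith h (mul_pos (nnnorm_pos.mpr hw) hK) hinner
  rw [integral_inner hμ, integral_inner hν, ← inner_sub_right, real_inner_self_eq_norm_sq] at key
  refine le_of_mul_le_mul_left ?_ hw'
  push_cast at key
  linarith

end TestFunctionBound

section StronglyMonotone

variable {E : Type*} [NormedAddCommGroup E] [InnerProductSpace ℝ E]

def StronglyMonotoneOn (α : ℝ) (F : E → E) (s : Set E) : Prop :=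
  ∀ x ∈ s, ∀ y ∈ s, α * ‖x - y‖ ^ 2 ≤ ⟪F x - F y, x - y⟫

theorem StronglyMonotoneOn.mul_norm_sub_le {α : ℝ} {F F' : E → E} {s : Set E}
    (hF : StronglyMonotoneOn α F s) {x y : E} (hx : x ∈ s) (hy : y ∈ s)
    (hFx : F x = 0) (hF'y : F' y = 0) :
    α * ‖x - y‖ ≤ ‖F' y - F y‖ := by
  rcases eq_or_ne x y with rfl | hxy
  · simp
  have hpos : 0 < ‖x - y‖ := norm_pos_iff.mpr (sub_ne_zero.mpr hxy)
  have h := calc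
    α * ‖x - y‖ ^ 2 ≤ ⟪F x - F y, x - y⟫ := hF x hx y hy
    _ = ⟪F' y - F y, x - y⟫ := by rw [hFx, hF'y]
    _ ≤ ‖F' y - F y‖ * ‖x - y‖ := real_inner_le_norm _ _
  refine le_of_mul_le_mul_right ?_ hpos
  linarith

end StronglyMonotone

theorem solution_map_lipschitz_general
    {d : ℕ} {Z : Type*} [MetricSpace Z] [MeasurableSpace Z]
    (Θ : Set (EuclideanSpace ℝ (Fin d)))
    (D : EuclideanSpace ℝ (Fin d) → Measure Z)
    (G : EuclideanSpace ℝ (Fin d) → Z → EuclideanSpace ℝ (Fin d))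
    (hint : ∀ y θ, Integrable (G y) (D θ))
    (α β ε : ℝ) (hα : 0 < α) (hβ : 0 < β)
    -- α-strong monotonicity of y ↦ G_θ(y) on Θ, for every θ
    (hmono : ∀ θ, ∀ y₁ ∈ Θ, ∀ y₂ ∈ Θ,
      α * ‖y₁ - y₂‖ ^ 2 ≤
        (inner ℝ ((∫ z, G y₁ z ∂(D θ)) - ∫ z, G y₂ z ∂(D θ)) (y₁ - y₂) : ℝ))
    -- β-Lipschitzness of z ↦ G(y,z)
    (hLipz : ∀ y, ∀ z z' : Z, ‖G y z - G y z'‖ ≤ β * dist z z')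
    -- ε-sensitivity of D in W₁, via Kantorovich–Rubinstein duality
    (hsens : ∀ θ θ', ∀ f : Z → ℝ, LipschitzWith 1 f →
      (∫ z, f z ∂(D θ)) - (∫ z, f z ∂(D θ')) ≤ ε * ‖θ - θ'‖)
    -- sol(θ) is the unique zero of G_θ in Θ
    (sol : EuclideanSpace ℝ (Fin d) → EuclideanSpace ℝ (Fin d))
    (hsol : ∀ θ, sol θ ∈ Θ ∧ (∫ z, G (sol θ) z ∂(D θ)) = 0) :
    ∀ θ θ', ‖sol θ - sol θ'‖ ≤ (β * ε / α) * ‖θ - θ'‖ := by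
  intro θ θ'
  have hGLip : ∀ y, LipschitzWith β.toNNReal (G y) := fun y =>
    LipschitzWith.of_dist_le_mul fun z z' => by
      rw [Real.coe_toNNReal β hβ.le, dist_eq_norm]
      exact hLipz y z z'
  have hgap : α * ‖sol θ - sol θ'‖ ≤
      ‖∫ z, G (sol θ') z ∂(D θ') - ∫ z, G (sol θ') z ∂(D θ)‖ :=
    StronglyMonotoneOn.mul_norm_sub_le (F := fun y => ∫ z, G y z ∂(D θ))
      (F' := fun y => ∫ z, G y z ∂(D θ')) (hmono θ)
      (hsol θ).1 (hsol θ').1 (hsol θ).2 (hsol θ').2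
  have hshift := norm_integral_sub_integral_le_of_lipschitzWith (hsens θ' θ)
    (Real.toNNReal_pos.mpr hβ) (hGLip (sol θ')) (hint _ θ') (hint _ θ)
  rw [Real.coe_toNNReal β hβ.le, norm_sub_rev θ'] at hshift
  rw [div_mul_eq_mul_div, le_div_iff₀ hα]
  linarith

/-- If G_θ(y) = E_{Z∼D(θ)} G(y,Z) is α-strongly monotone in y, the distribution
map D is ε-sensitive in Wasserstein-1 distance (expressed via the
Kantorovich–Rubinstein duality), and z ↦ G(y,z) is β-Lipschitz, then the
solution map θ ↦ sol(θ) (the unique zero of G_θ in Θ) is (βε/α)-Lipschitz. -/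
theorem solution_map_lipschitz
    {d : ℕ} {Z : Type*} [MetricSpace Z] [MeasurableSpace Z] [BorelSpace Z]
    (Θ : Set (EuclideanSpace ℝ (Fin d))) (hΘ : Convex ℝ Θ)
    (D : EuclideanSpace ℝ (Fin d) → Measure Z)
    (hprob : ∀ θ, IsProbabilityMeasure (D θ))
    (G : EuclideanSpace ℝ (Fin d) → Z → EuclideanSpace ℝ (Fin d))
    (hint : ∀ y θ, Integrable (G y) (D θ))
    (α β ε : ℝ) (hα : 0 < α) (hβ : 0 < β) (hε : 0 ≤ ε)
    -- α-strong monotonicity of y ↦ G_θ(y) on Θ, for every θ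
    (hmono : ∀ θ, ∀ y₁ ∈ Θ, ∀ y₂ ∈ Θ,
      α * ‖y₁ - y₂‖ ^ 2 ≤
        (inner ℝ ((∫ z, G y₁ z ∂(D θ)) - ∫ z, G y₂ z ∂(D θ)) (y₁ - y₂) : ℝ))
    -- β-Lipschitzness of z ↦ G(y,z)
    (hLipz : ∀ y, ∀ z z' : Z, ‖G y z - G y z'‖ ≤ β * dist z z')
    -- ε-sensitivity of D in W₁, via Kantorovich–Rubinstein duality
    (hsens : ∀ θ θ', ∀ f : Z → ℝ, LipschitzWith 1 f →
      (∫ z, f z ∂(D θ)) - (∫ z, f z ∂(D θ')) ≤ ε * ‖θ - θ'‖)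
    -- sol(θ) is the unique zero of G_θ in Θ
    (sol : EuclideanSpace ℝ (Fin d) → EuclideanSpace ℝ (Fin d))
    (hsol : ∀ θ, sol θ ∈ Θ ∧ (∫ z, G (sol θ) z ∂(D θ)) = 0)
    (huniq : ∀ θ, ∀ y ∈ Θ, (∫ z, G y z ∂(D θ)) = 0 → y = sol θ) :
    ∀ θ θ', ‖sol θ - sol θ'‖ ≤ (β * ε / α) * ‖θ - θ'‖ :=
  solution_map_lipschitz_general Θ D G hint α β ε hα hβ hmono hLipz hsens sol hsol
end

section
/- Under the hypotheses of the previous setting with multiple players i = 1,...,m — each player's gradient map being β_i-Lipschitz in data and each distribution map D_i being ε_i-sensitive, with the joint map G_θ α-strongly monotone — if Σ_{i=1}^m (β_i ε_i / α)² < 1, then the solution map sol(θ) is a contraction with constant C = sqrt(Σ_{i=1}^m (β_i ε_i / α)²) < 1, and hence there exists a unique stable equilibrium θ_PS with sol(θ_PS) = θ_PS. -/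
open MeasureTheory
open scoped RealInnerProductSpace

/-!
Strong monotonicity of `G_θ` and `G_θ (sol θ) = 0 = G_θ' (sol θ')` give
`α ‖sol θ - sol θ'‖² ≤ ⟪G_θ' y' - G_θ y', sol θ - sol θ'⟫` with `y' = sol θ'`. Testing the
`ε_i`-sensitivity of `D_i` against the `β_i ‖u‖`-Lipschitz function `z ↦ ⟪u, G_i(y', z)⟫`
bounds the `i`-th summand by `β_i ε_i ‖θ - θ'‖ ‖u‖`, and Cauchy–Schwarz over the players turns
this into the contraction constant `C`. Banach's theorem on the whole (complete) space then gives
the unique fixed point of `sol`, which lies in `Θ` because `sol` takes values there.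
-/

section Sensitivity

variable {Z : Type*} [PseudoMetricSpace Z] [MeasurableSpace Z] {μ ν : Measure Z} {δ : ℝ}

theorem integral_sub_integral_le_mul_of_dist_le
    (hsens : ∀ f : Z → ℝ, LipschitzWith 1 f → ∫ z, f z ∂μ - ∫ z, f z ∂ν ≤ δ)
    {K : ℝ} (hK : 0 < K) {f : Z → ℝ} (hf : ∀ z z', dist (f z) (f z') ≤ K * dist z z') :
    ∫ z, f z ∂μ - ∫ z, f z ∂ν ≤ K * δ := by
  have hscaled : LipschitzWith 1 fun z => K⁻¹ * f z := by
    refine LipschitzWith.of_dist_le_mul fun z z' => ?_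
    rw [dist_eq_norm, ← mul_sub, norm_mul, norm_inv, Real.norm_of_nonneg hK.le, NNReal.coe_one,
      one_mul, inv_mul_le_iff₀ hK, ← dist_eq_norm]
    exact hf z z'
  have h := hsens _ hscaled
  rwa [integral_const_mul, integral_const_mul, ← mul_sub, inv_mul_le_iff₀ hK] at h

variable {E : Type*} [NormedAddCommGroup E] [InnerProductSpace ℝ E] [CompleteSpace E]

theorem inner_integral_sub_integral_le
    (hsens : ∀ f : Z → ℝ, LipschitzWith 1 f → ∫ z, f z ∂μ - ∫ z, f z ∂ν ≤ δ)
    {β : ℝ} (hβ : 0 < β) {g : Z → E} (hg : ∀ z z', ‖g z - g z'‖ ≤ β * dist z z')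
    (hgμ : Integrable g μ) (hgν : Integrable g ν) (u : E) :
    ⟪u, (∫ z, g z ∂μ) - ∫ z, g z ∂ν⟫ ≤ β * ‖u‖ * δ := by
  rcases eq_or_ne u 0 with rfl | hu
  · simp
  have hLip : ∀ z z', dist ⟪u, g z⟫ ⟪u, g z'⟫ ≤ β * ‖u‖ * dist z z' := fun z z' => by
    rw [Real.dist_eq, ← inner_sub_right]
    calc |⟪u, g z - g z'⟫| ≤ ‖u‖ * ‖g z - g z'‖ := abs_real_inner_le_norm _ _
      _ ≤ ‖u‖ * (β * dist z z') := by gcongr; exact hg z z'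
      _ = β * ‖u‖ * dist z z' := by ring
  have h := integral_sub_integral_le_mul_of_dist_le hsens (by positivity) hLip
  rwa [integral_inner hgμ, integral_inner hgν, ← inner_sub_right] at h

end Sensitivity

theorem norm_sub_le_div_of_strongly_monotone {E : Type*} [NormedAddCommGroup E]
    [InnerProductSpace ℝ E] {F F' : E → E} {y y' : E} {α c : ℝ} (hα : 0 < α)
    (hmono : α * ‖y - y'‖ ^ 2 ≤ ⟪F y - F y', y - y'⟫) (hy : F y = 0) (hy' : F' y' = 0)
    (hc : 0 ≤ c) (hpert : ⟪F' y' - F y', y - y'⟫ ≤ c * ‖y - y'‖) :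
    ‖y - y'‖ ≤ c / α := by
  rw [hy, ← hy'] at hmono
  rw [le_div_iff₀ hα]
  nlinarith [hmono.trans hpert, norm_nonneg (y - y')]

theorem PiLp.sum_mul_norm_le {ι : Type*} [Fintype ι] {E : ι → Type*}
    [∀ i, SeminormedAddCommGroup (E i)] (c : ι → ℝ) (w : PiLp 2 E) :
    ∑ i, c i * ‖w i‖ ≤ √(∑ i, c i ^ 2) * ‖w‖ := by
  rw [PiLp.norm_eq_of_L2]
  exact Real.sum_mul_le_sqrt_mul_sqrt _ _ _

section Joint

variable {ι : Type*} {E : ι → Type*} [∀ i, NormedAddCommGroup (E i)]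
  [∀ i, InnerProductSpace ℝ (E i)] {Z : ι → Type*} [∀ i, MeasurableSpace (Z i)] {P Y : Type*}

noncomputable def jointGrad (D : (i : ι) → P → Measure (Z i)) (G : (i : ι) → Y → Z i → E i)
    (θ : P) (y : Y) : PiLp 2 E :=
  WithLp.toLp 2 fun i => ∫ z, G i y z ∂(D i θ)

variable {D : (i : ι) → P → Measure (Z i)}

theorem jointGrad_eq_zero_iff {G : (i : ι) → Y → Z i → E i} {θ : P} {y : Y} :
    jointGrad D G θ y = 0 ↔ ∀ i, ∫ z, G i y z ∂(D i θ) = 0 := by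
  simp [jointGrad, funext_iff]

variable [Fintype ι] [∀ i, CompleteSpace (E i)] [∀ i, PseudoMetricSpace (Z i)]
  [SeminormedAddCommGroup P] {β ε : ι → ℝ}

theorem inner_jointGrad_sub_le {G : (i : ι) → Y → Z i → E i} (hβ : ∀ i, 0 < β i)
    (hLipz : ∀ i y, ∀ z z' : Z i, ‖G i y z - G i y z'‖ ≤ β i * dist z z')
    (hint : ∀ i y θ, Integrable (G i y) (D i θ))
    (hsens : ∀ i θ θ', ∀ f : Z i → ℝ, LipschitzWith 1 f →
      (∫ z, f z ∂(D i θ)) - (∫ z, f z ∂(D i θ')) ≤ ε i * ‖θ - θ'‖)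
    (θ θ' : P) (y : Y) (w : PiLp 2 E) :
    ⟪jointGrad D G θ y - jointGrad D G θ' y, w⟫ ≤ √(∑ i, (β i * ε i) ^ 2) * ‖θ - θ'‖ * ‖w‖ := by
  have hplayer : ∀ i, ⟪(∫ z, G i y z ∂(D i θ)) - ∫ z, G i y z ∂(D i θ'), w i⟫ ≤
      ‖θ - θ'‖ * (β i * ε i * ‖w i‖) := fun i => by
    rw [real_inner_comm]
    refine (inner_integral_sub_integral_le (hsens i θ θ') (hβ i) (hLipz i y) (hint i y θ)
      (hint i y θ') (w i)).trans_eq ?_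
    ring
  calc ⟪jointGrad D G θ y - jointGrad D G θ' y, w⟫
      = ∑ i, ⟪(∫ z, G i y z ∂(D i θ)) - ∫ z, G i y z ∂(D i θ'), w i⟫ := by
        simp [PiLp.inner_apply, jointGrad]
    _ ≤ ‖θ - θ'‖ * ∑ i, β i * ε i * ‖w i‖ := by
        rw [Finset.mul_sum]
        exact Finset.sum_le_sum fun i _ => hplayer i
    _ ≤ ‖θ - θ'‖ * (√(∑ i, (β i * ε i) ^ 2) * ‖w‖) := by
        gcongr
        exact PiLp.sum_mul_norm_le _ w
    _ = √(∑ i, (β i * ε i) ^ 2) * ‖θ - θ'‖ * ‖w‖ := by ring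

theorem norm_sol_sub_le {Θ : Set (PiLp 2 E)} {G : (i : ι) → PiLp 2 E → Z i → E i} {α : ℝ}
    (hα : 0 < α) (hβ : ∀ i, 0 < β i)
    (hLipz : ∀ i y, ∀ z z' : Z i, ‖G i y z - G i y z'‖ ≤ β i * dist z z')
    (hint : ∀ i y θ, Integrable (G i y) (D i θ))
    (hsens : ∀ i θ θ', ∀ f : Z i → ℝ, LipschitzWith 1 f →
      (∫ z, f z ∂(D i θ)) - (∫ z, f z ∂(D i θ')) ≤ ε i * ‖θ - θ'‖)
    (hmono : ∀ θ, ∀ y₁ ∈ Θ, ∀ y₂ ∈ Θ,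
      α * ‖y₁ - y₂‖ ^ 2 ≤ ⟪jointGrad D G θ y₁ - jointGrad D G θ y₂, y₁ - y₂⟫)
    {sol : P → PiLp 2 E} (hsol : ∀ θ, sol θ ∈ Θ ∧ ∀ i, ∫ z, G i (sol θ) z ∂(D i θ) = 0)
    (θ θ' : P) :
    ‖sol θ - sol θ'‖ ≤ √(∑ i, (β i * ε i) ^ 2) / α * ‖θ - θ'‖ := by
  rw [div_mul_eq_mul_div]
  refine norm_sub_le_div_of_strongly_monotone hα (hmono θ _ (hsol θ).1 _ (hsol θ').1)
    (jointGrad_eq_zero_iff.2 (hsol θ).2) (jointGrad_eq_zero_iff.2 (hsol θ').2) (by positivity) ?_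
  rw [norm_sub_rev θ]
  exact inner_jointGrad_sub_le hβ hLipz hint hsens θ' θ _ _

end Joint

theorem multiplayer_stable_equilibrium_general
    {m : ℕ} {d : Fin m → ℕ}
    {Z : Fin m → Type*} [∀ i, MetricSpace (Z i)] [∀ i, MeasurableSpace (Z i)]
    -- the joint parameter space E = Θ₁ × ... × Θ_m sits inside the ℓ² product
    (Θ : Set (PiLp 2 (fun i : Fin m => EuclideanSpace ℝ (Fin (d i)))))
    (D : (i : Fin m) → PiLp 2 (fun i : Fin m => EuclideanSpace ℝ (Fin (d i))) → Measure (Z i))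
    (G : (i : Fin m) → PiLp 2 (fun i : Fin m => EuclideanSpace ℝ (Fin (d i))) →
      Z i → EuclideanSpace ℝ (Fin (d i)))
    (hint : ∀ i y θ, Integrable (G i y) (D i θ))
    (α : ℝ) (β ε : Fin m → ℝ)
    (hα : 0 < α) (hβ : ∀ i, 0 < β i)
    -- each G_i(y, ·) is β_i-Lipschitz in the data z^i
    (hLipz : ∀ i y, ∀ z z' : Z i, ‖G i y z - G i y z'‖ ≤ β i * dist z z')
    -- each D_i is ε_i-sensitive in W₁ (Kantorovich–Rubinstein duality form)
    (hsens : ∀ i θ θ', ∀ f : Z i → ℝ, LipschitzWith 1 f →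
      (∫ z, f z ∂(D i θ)) - (∫ z, f z ∂(D i θ')) ≤ ε i * ‖θ - θ'‖)
    -- the joint map G_θ(y) is α-strongly monotone in y
    (hmono : ∀ θ, ∀ y₁ ∈ Θ, ∀ y₂ ∈ Θ,
      α * ‖y₁ - y₂‖ ^ 2 ≤
        @inner ℝ (PiLp 2 (fun i : Fin m => EuclideanSpace ℝ (Fin (d i)))) _
          (((WithLp.toLp 2 (fun i => ∫ z, G i y₁ z ∂(D i θ))) :
            PiLp 2 (fun i : Fin m => EuclideanSpace ℝ (Fin (d i)))) -
          ((WithLp.toLp 2 (fun i => ∫ z, G i y₂ z ∂(D i θ))) :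
            PiLp 2 (fun i : Fin m => EuclideanSpace ℝ (Fin (d i)))))
          (y₁ - y₂))
    -- sol(θ) is the unique zero of the joint map G_θ in Θ
    (sol : PiLp 2 (fun i : Fin m => EuclideanSpace ℝ (Fin (d i))) →
      PiLp 2 (fun i : Fin m => EuclideanSpace ℝ (Fin (d i))))
    (hsol : ∀ θ, sol θ ∈ Θ ∧ ∀ i, (∫ z, G i (sol θ) z ∂(D i θ)) = 0)
    -- compatibility condition
    (hcompat : ∑ i, (β i * ε i / α) ^ 2 < 1) :
    (∀ θ θ', ‖sol θ - sol θ'‖ ≤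
        Real.sqrt (∑ i, (β i * ε i / α) ^ 2) * ‖θ - θ'‖) ∧
    (∃! θPS, θPS ∈ Θ ∧ sol θPS = θPS) := by
  set C := √(∑ i, (β i * ε i / α) ^ 2)
  have hC : C = √(∑ i, (β i * ε i) ^ 2) / α := by
    simp only [C, div_pow, ← Finset.sum_div, Real.sqrt_div' _ (sq_nonneg α),
      Real.sqrt_sq hα.le]
  have hlip : ∀ θ θ', ‖sol θ - sol θ'‖ ≤ C * ‖θ - θ'‖ :=
    hC ▸ norm_sol_sub_le hα hβ hLipz hint hsens hmono hsol
  have hcontr : ContractingWith C.toNNReal sol :=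
    ⟨Real.toNNReal_lt_one.2 ((Real.sqrt_lt' one_pos).2 (by rwa [one_pow])),
      LipschitzWith.of_dist_le' fun θ θ' => by simpa only [dist_eq_norm] using hlip θ θ'⟩
  have hfix := hcontr.fixedPoint_isFixedPt
  exact ⟨hlip, _, ⟨hfix ▸ (hsol _).1, hfix⟩, fun θ hθ => hcontr.fixedPoint_unique hθ.2⟩

/-- Multiplayer setting: if each player's gradient map G_i is β_i-Lipschitz in
the data, each distribution map D_i is ε_i-sensitive in W₁, the joint map
G_θ(y) = (E_{Z^i∼D_i(θ)} G_i(y, Z^i))_i is α-strongly monotone in y, and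
Σ_i (β_i ε_i / α)² < 1, then the solution map sol is a contraction with
constant C = sqrt(Σ_i (β_i ε_i / α)²) < 1, and there exists a unique stable
equilibrium θ_PS with sol(θ_PS) = θ_PS. -/
theorem multiplayer_stable_equilibrium
    {m : ℕ} {d : Fin m → ℕ}
    {Z : Fin m → Type*} [∀ i, MetricSpace (Z i)] [∀ i, MeasurableSpace (Z i)]
    [∀ i, BorelSpace (Z i)]
    -- the joint parameter space E = Θ₁ × ... × Θ_m sits inside the ℓ² product
    (Θ : Set (PiLp 2 (fun i : Fin m => EuclideanSpace ℝ (Fin (d i)))))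
    (hΘconv : Convex ℝ Θ) (hΘne : Θ.Nonempty) (hΘcl : IsClosed Θ)
    (D : (i : Fin m) → PiLp 2 (fun i : Fin m => EuclideanSpace ℝ (Fin (d i))) → Measure (Z i))
    (hprob : ∀ i θ, IsProbabilityMeasure (D i θ))
    (G : (i : Fin m) → PiLp 2 (fun i : Fin m => EuclideanSpace ℝ (Fin (d i))) →
      Z i → EuclideanSpace ℝ (Fin (d i)))
    (hint : ∀ i y θ, Integrable (G i y) (D i θ))
    (α : ℝ) (β ε : Fin m → ℝ)
    (hα : 0 < α) (hβ : ∀ i, 0 < β i) (hε : ∀ i, 0 ≤ ε i)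
    -- each G_i(y, ·) is β_i-Lipschitz in the data z^i
    (hLipz : ∀ i y, ∀ z z' : Z i, ‖G i y z - G i y z'‖ ≤ β i * dist z z')
    -- each D_i is ε_i-sensitive in W₁ (Kantorovich–Rubinstein duality form)
    (hsens : ∀ i θ θ', ∀ f : Z i → ℝ, LipschitzWith 1 f →
      (∫ z, f z ∂(D i θ)) - (∫ z, f z ∂(D i θ')) ≤ ε i * ‖θ - θ'‖)
    -- the joint map G_θ(y) is α-strongly monotone in y
    (hmono : ∀ θ, ∀ y₁ ∈ Θ, ∀ y₂ ∈ Θ,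
      α * ‖y₁ - y₂‖ ^ 2 ≤
        @inner ℝ (PiLp 2 (fun i : Fin m => EuclideanSpace ℝ (Fin (d i)))) _
          (((WithLp.toLp 2 (fun i => ∫ z, G i y₁ z ∂(D i θ))) :
            PiLp 2 (fun i : Fin m => EuclideanSpace ℝ (Fin (d i)))) -
          ((WithLp.toLp 2 (fun i => ∫ z, G i y₂ z ∂(D i θ))) :
            PiLp 2 (fun i : Fin m => EuclideanSpace ℝ (Fin (d i)))))
          (y₁ - y₂))
    -- sol(θ) is the unique zero of the joint map G_θ in Θ
    (sol : PiLp 2 (fun i : Fin m => EuclideanSpace ℝ (Fin (d i))) →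
      PiLp 2 (fun i : Fin m => EuclideanSpace ℝ (Fin (d i))))
    (hsol : ∀ θ, sol θ ∈ Θ ∧ ∀ i, (∫ z, G i (sol θ) z ∂(D i θ)) = 0)
    (huniq : ∀ θ, ∀ y ∈ Θ, (∀ i, (∫ z, G i y z ∂(D i θ)) = 0) → y = sol θ)
    -- compatibility condition
    (hcompat : ∑ i, (β i * ε i / α) ^ 2 < 1) :
    (∀ θ θ', ‖sol θ - sol θ'‖ ≤
        Real.sqrt (∑ i, (β i * ε i / α) ^ 2) * ‖θ - θ'‖) ∧
    (∃! θPS, θPS ∈ Θ ∧ sol θPS = θPS) :=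
  multiplayer_stable_equilibrium_general Θ D G hint α β ε hα hβ hLipz hsens hmono sol hsol hcompat
end

section
/- (Error gap for plug-in optima.) For each player i ∈ [m], suppose the loss ℓ_i is uniformly bounded by M_i, the plug-in risk PR^{β_i*}(θ^i) = E_{Z^i ∼ D_{β_i*}(θ)} ℓ_i(θ^i, θ_PO^{β_{-i}*}, Z^i) is λ_i-strongly convex in θ^i with minimizer θ_PO^{β_i*}, the true risk PR^i(θ^i) = E_{Z^i ∼ D_i(θ)} ℓ_i(θ^i, θ_PO^{-i}, Z^i) has minimizer θ_PO^i, and the two distribution maps satisfy sup_θ d_TV(D_{β_i*}(θ), D_i(θ)) ≤ η_i. Then ‖θ_PO - θ_PO^{β*}‖² = Σ_{i=1}^m ‖θ_PO^i - θ_PO^{β_i*}‖² ≤ Σ_{i=1}^m 8 M_i η_i / λ_i. -/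
open MeasureTheory

/-- Error gap between true Nash equilibria and plug-in Nash equilibria.
For each player i, the loss is bounded by M_i, the plug-in risk PR^{β_i*} is
λ_i-strongly convex with minimizer θ_PO^{β_i*}, the true risk PR^i is minimized
at θ_PO^i, and the two distribution maps are η_i-close in total variation.
Then Σ_i ‖θ_PO^i - θ_PO^{β_i*}‖² ≤ Σ_i 8 M_i η_i / λ_i. -/
theorem plugin_nash_error_gap
    {m : ℕ} {d : Fin m → ℕ}
    {Z : Fin m → Type*} [∀ i, MeasurableSpace (Z i)]
    (μ : (i : Fin m) → Measure (Z i))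
    -- densities of the plug-in map D_{β_i*}(θ) and the true map D_i(θ),
    -- as functions of player i's own parameter θ^i (the other players being
    -- fixed at the respective equilibria)
    (pstar ptrue : (i : Fin m) → EuclideanSpace ℝ (Fin (d i)) → Z i → ℝ)
    (hpstar_nn : ∀ i θ z, 0 ≤ pstar i θ z) (hptrue_nn : ∀ i θ z, 0 ≤ ptrue i θ z)
    (hpstar_prob : ∀ i θ, ∫ z, pstar i θ z ∂(μ i) = 1)
    (hptrue_prob : ∀ i θ, ∫ z, ptrue i θ z ∂(μ i) = 1)
    -- the convex feasible sets and bounded losses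
    (S : (i : Fin m) → Set (EuclideanSpace ℝ (Fin (d i))))
    (hSconv : ∀ i, Convex ℝ (S i))
    (ℓ : (i : Fin m) → EuclideanSpace ℝ (Fin (d i)) → Z i → ℝ)
    (M : Fin m → ℝ) (hM : ∀ i, 0 < M i)
    (hbdd : ∀ i θ z, |ℓ i θ z| ≤ M i)
    (hint_star : ∀ i θ, Integrable (fun z => ℓ i θ z * pstar i θ z) (μ i))
    (hint_true : ∀ i θ, Integrable (fun z => ℓ i θ z * ptrue i θ z) (μ i))
    -- η_i-misspecification in total variation: sup_θ d_TV(D_{β_i*}(θ), D_i(θ)) ≤ η_i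
    (η : Fin m → ℝ) (hη : ∀ i, 0 ≤ η i)
    (hTV : ∀ i θ, (1 / 2) * (∫ z, |pstar i θ z - ptrue i θ z| ∂(μ i)) ≤ η i)
    -- the plug-in and true performative risks of player i
    (PRstar PRtrue : (i : Fin m) → EuclideanSpace ℝ (Fin (d i)) → ℝ)
    (hPRstar : ∀ i θ, PRstar i θ = ∫ z, ℓ i θ z * pstar i θ z ∂(μ i))
    (hPRtrue : ∀ i θ, PRtrue i θ = ∫ z, ℓ i θ z * ptrue i θ z ∂(μ i))
    -- the plug-in equilibria: λ_i-strongly convex plug-in risk with minimizer θβ i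
    (lam : Fin m → ℝ) (hlam : ∀ i, 0 < lam i)
    (θβ θPO : (i : Fin m) → EuclideanSpace ℝ (Fin (d i)))
    (hθβ : ∀ i, θβ i ∈ S i) (hθPO : ∀ i, θPO i ∈ S i)
    (hsc : ∀ i, ∀ θ ∈ S i, PRstar i (θβ i) + lam i / 2 * ‖θ - θβ i‖ ^ 2 ≤ PRstar i θ)
    -- the true equilibria: θPO i minimizes the true risk
    (hmin : ∀ i, ∀ θ ∈ S i, PRtrue i (θPO i) ≤ PRtrue i θ) :
    ∑ i, ‖θPO i - θβ i‖ ^ 2 ≤ ∑ i, 8 * M i * η i / lam i := by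
  refine Finset.sum_le_sum fun i _ => ?_
  -- integrability of densities
  have hps_int : ∀ θ, Integrable (pstar i θ) (μ i) := by
    intro θ
    by_contra h
    have := hpstar_prob i θ
    rw [integral_undef h] at this
    exact one_ne_zero this.symm
  have hpt_int : ∀ θ, Integrable (ptrue i θ) (μ i) := by
    intro θ
    by_contra h
    have := hptrue_prob i θ
    rw [integral_undef h] at this
    exact one_ne_zero this.symm
  -- key bound: |PRstar - PRtrue| ≤ 2 M η
  have key : ∀ θ, |PRstar i θ - PRtrue i θ| ≤ 2 * M i * η i := by
    intro θ
    rw [hPRstar, hPRtrue, ← integral_sub (hint_star i θ) (hint_true i θ)]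
    have h1 : |∫ z, (ℓ i θ z * pstar i θ z - ℓ i θ z * ptrue i θ z) ∂(μ i)|
        ≤ ∫ z, |ℓ i θ z * pstar i θ z - ℓ i θ z * ptrue i θ z| ∂(μ i) := by
      simpa [Real.norm_eq_abs] using
        norm_integral_le_integral_norm (fun z => ℓ i θ z * pstar i θ z - ℓ i θ z * ptrue i θ z) (μ := μ i)
    have h2 : ∫ z, |ℓ i θ z * pstar i θ z - ℓ i θ z * ptrue i θ z| ∂(μ i)
        ≤ ∫ z, M i * |pstar i θ z - ptrue i θ z| ∂(μ i) := by
      refine integral_mono ((hint_star i θ).sub (hint_true i θ)).abs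
        (((hps_int θ).sub (hpt_int θ)).abs.const_mul (M i)) fun z => ?_
      have : ℓ i θ z * pstar i θ z - ℓ i θ z * ptrue i θ z
          = ℓ i θ z * (pstar i θ z - ptrue i θ z) := by ring
      rw [this, abs_mul]
      exact mul_le_mul_of_nonneg_right (hbdd i θ z) (abs_nonneg _)
    have h3 : ∫ z, M i * |pstar i θ z - ptrue i θ z| ∂(μ i)
        = M i * ∫ z, |pstar i θ z - ptrue i θ z| ∂(μ i) := integral_const_mul _ _
    have h4 : ∫ z, |pstar i θ z - ptrue i θ z| ∂(μ i) ≤ 2 * η i := by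
      have := hTV i θ
      linarith
    calc |∫ z, (ℓ i θ z * pstar i θ z - ℓ i θ z * ptrue i θ z) ∂(μ i)|
        ≤ M i * ∫ z, |pstar i θ z - ptrue i θ z| ∂(μ i) := by rw [← h3]; exact h1.trans h2
      _ ≤ M i * (2 * η i) := by
          exact mul_le_mul_of_nonneg_left h4 (hM i).le
      _ = 2 * M i * η i := by ring
  have hA := hsc i (θPO i) (hθPO i)
  have hB := hmin i (θβ i) (hθβ i)
  have kPO := key (θPO i)
  have kβ := key (θβ i)
  have habsPO := abs_le.mp kPO
  have habsβ := abs_le.mp kβ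
  have hn : lam i / 2 * ‖θPO i - θβ i‖ ^ 2 ≤ 4 * M i * η i := by linarith
  rw [le_div_iff₀ (hlam i)]
  nlinarith [hn]
end
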